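/- Let n ≥ 1, let φ_1,…,φ_n be the hat functions on [0,1], let g : [0,1] → ℝ be continuous, and suppose ω ≥ 0 satisfies |g(x) − g(y)| ≤ ω for all x, y ∈ [0,1] with |x − y| ≤ 2/(n+1). Let K_n(g) be the n×n matrix with (K_n(g))_{ij} = ∫₀¹ g(x) φ_j'(x) φ_i'(x) dx and let D_n(g) = diag(g(1/n),…,g(n/n)). Then: (i) |(K_n(g))_{ij} − g(i/n)·(K_n(1))_{ij}| ≤ 2(n+1)·ω for all i, j; (ii) the matrix Y_n = (1/(n+1))·(K_n(g) − D_n(g)·K_n(1)) is tridiagonal and its spectral (operator 2-) norm satisfies ‖Y_n‖ ≤ 6ω. -/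

import Mathlib

open MeasureTheory intervalIntegral

/-- The hat function `φ_i` on `[0,1]` for the uniform grid `x_i = i/(n+1)`. -/
noncomputable def hat (n i : ℕ) (x : ℝ) : ℝ :=
  if x ∈ Set.Ico (((i : ℝ) - 1) * (1 / ((n : ℝ) + 1))) ((i : ℝ) * (1 / ((n : ℝ) + 1))) then
    (x - ((i : ℝ) - 1) * (1 / ((n : ℝ) + 1))) / (1 / ((n : ℝ) + 1))
  else if x ∈ Set.Ico ((i : ℝ) * (1 / ((n : ℝ) + 1))) (((i : ℝ) + 1) * (1 / ((n : ℝ) + 1))) then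
    (((i : ℝ) + 1) * (1 / ((n : ℝ) + 1)) - x) / (1 / ((n : ℝ) + 1))
  else 0

/-- The (weak) derivative of the hat function `φ_i`. -/
noncomputable def hatDeriv (n i : ℕ) (x : ℝ) : ℝ :=
  if x ∈ Set.Ioo (((i : ℝ) - 1) * (1 / ((n : ℝ) + 1))) ((i : ℝ) * (1 / ((n : ℝ) + 1))) then
    (n : ℝ) + 1
  else if x ∈ Set.Ioo ((i : ℝ) * (1 / ((n : ℝ) + 1))) (((i : ℝ) + 1) * (1 / ((n : ℝ) + 1))) then
    -((n : ℝ) + 1)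
  else 0

/-- The FE stiffness matrix with weight `g`: `(K_n(g))_{ij} = ∫₀¹ g φ_j' φ_i'`. -/
noncomputable def Kmat (n : ℕ) (g : ℝ → ℝ) : Matrix (Fin n) (Fin n) ℝ :=
  Matrix.of fun i j =>
    ∫ x in (0 : ℝ)..1, g x * hatDeriv n ((j : ℕ) + 1) x * hatDeriv n ((i : ℕ) + 1) x

/-- The spectral norm (operator norm induced by the Euclidean vector norm) of a real
square matrix. -/
noncomputable def opNorm {n : ℕ} (M : Matrix (Fin n) (Fin n) ℝ) : ℝ :=
  ‖LinearMap.toContinuousLinearMap (Matrix.toEuclideanLin M)‖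

/-!
On the support of `φ'_{j+1} φ'_{i+1}`, the two grid cells `(i h, (i + 2) h)` around `x_{i+1}`,
the integrand is at most `(n + 1)²` in absolute value, and this interval of length `2h` also
contains the sampling point `(i + 1)/n`. Replacing `g` by its sampled value there therefore costs
at most `ω (n + 1)² · 2h = 2 (n + 1) ω`. Hat derivatives whose indices differ by two or more have
disjoint supports, so `Y` is tridiagonal with entries bounded by `2ω`; its row and column sums
are then at most `6ω`, and the Schur test `‖Y‖ ≤ √(|Y|₁ |Y|_∞)` gives the norm bound.
-/

open Set Function

theorem Matrix.norm_toEuclideanLin_le_of_sum_abs_le {m n : Type*} [Fintype m] [Fintype n]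
    [DecidableEq n] (M : Matrix m n ℝ) {R C : ℝ} (hR : 0 ≤ R) (hrow : ∀ i, ∑ j, |M i j| ≤ R)
    (hcol : ∀ j, ∑ i, |M i j| ≤ C) :
    ‖(Matrix.toEuclideanLin M).toContinuousLinearMap‖ ≤ √(R * C) := by
  refine ContinuousLinearMap.opNorm_le_bound _ (Real.sqrt_nonneg _) fun x => ?_
  have hrow_sq : ∀ i, (∑ j, M i j * x j) ^ 2 ≤ R * ∑ j, |M i j| * x j ^ 2 := fun i => calc
    (∑ j, M i j * x j) ^ 2 ≤ (∑ j, |M i j|) * ∑ j, |M i j| * x j ^ 2 :=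
      Finset.sum_sq_le_sum_mul_sum_of_sq_le_mul _ (fun j _ => abs_nonneg _)
        (fun j _ => by positivity) fun j _ => by rw [← mul_assoc, abs_mul_abs_self, mul_pow, sq]
    _ ≤ R * ∑ j, |M i j| * x j ^ 2 := by gcongr; exact hrow i
  have hsq : ‖Matrix.toEuclideanLin M x‖ ^ 2 ≤ (R * C) * ‖x‖ ^ 2 := calc
    ‖Matrix.toEuclideanLin M x‖ ^ 2 = ∑ i, (∑ j, M i j * x j) ^ 2 := by
      simp [EuclideanSpace.real_norm_sq_eq, Matrix.mulVec, dotProduct]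
    _ ≤ ∑ i, R * ∑ j, |M i j| * x j ^ 2 := Finset.sum_le_sum fun i _ => hrow_sq i
    _ = R * ∑ j, (∑ i, |M i j|) * x j ^ 2 := by
      rw [← Finset.mul_sum, Finset.sum_comm]; simp_rw [Finset.sum_mul]
    _ ≤ R * ∑ j, C * x j ^ 2 := by gcongr with j; exact hcol j
    _ = (R * C) * ‖x‖ ^ 2 := by
      rw [EuclideanSpace.real_norm_sq_eq, mul_assoc, Finset.mul_sum (a := C)]
  calc ‖Matrix.toEuclideanLin M x‖ ≤ √((R * C) * ‖x‖ ^ 2) :=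
        Real.le_sqrt_of_sq_le hsq
    _ = √(R * C) * ‖x‖ := by rw [Real.sqrt_mul' _ (by positivity), Real.sqrt_sq (norm_nonneg _)]

open Finset in
lemma Fin.card_filter_natAbs_sub_le_one_le_three {n : ℕ} (i : Fin n) :
    #{j : Fin n | ((i : ℤ) - (j : ℤ)).natAbs ≤ 1} ≤ 3 := by
  calc #{j : Fin n | ((i : ℤ) - (j : ℤ)).natAbs ≤ 1}
      ≤ #(Icc ((i : ℤ) - 1) (i + 1)) := by
        refine card_le_card_of_injOn (fun j : Fin n => ((j : ℕ) : ℤ)) ?_ ?_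
        · intro j hj
          simp only [coe_filter, Finset.mem_univ, true_and, mem_ofPred_eq, coe_Icc, Set.mem_Icc,
            tsub_le_iff_right] at hj ⊢
          omega
        · intro j _ k _ hjk
          exact Fin.ext (by simpa using hjk)
    _ = 3 := by simp only [Int.card_Icc]; omega

open Finset in
lemma Matrix.sum_abs_le_of_tridiagonal {n : ℕ} {M : Matrix (Fin n) (Fin n) ℝ} {B : ℝ}
    (hband : ∀ i j : Fin n, 1 < ((i : ℤ) - (j : ℤ)).natAbs → M i j = 0)
    (hB : ∀ i j, |M i j| ≤ B) (i : Fin n) : ∑ j, |M i j| ≤ 3 * B := by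
  have hB0 : 0 ≤ B := (abs_nonneg _).trans (hB i i)
  calc ∑ j, |M i j| = ∑ j ∈ {j : Fin n | ((i : ℤ) - (j : ℤ)).natAbs ≤ 1}, |M i j| := by
        refine (sum_filter_of_ne fun j _ hj => ?_).symm
        by_contra h
        exact hj (by rw [hband i j (by omega), abs_zero])
    _ ≤ #{j : Fin n | ((i : ℤ) - (j : ℤ)).natAbs ≤ 1} • B :=
        sum_le_card_nsmul _ _ _ fun j _ => hB i j
    _ ≤ 3 * B := by
        rw [nsmul_eq_mul]
        gcongr
        exact_mod_cast Fin.card_filter_natAbs_sub_le_one_le_three i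

lemma abs_intervalIntegral_le_of_support_subset {F : ℝ → ℝ} {u v a b C : ℝ} (hab : a ≤ b)
    (hua : u ≤ a) (hbv : b ≤ v) (hsupp : support F ⊆ Ioc a b) (hC : ∀ x ∈ Ioc a b, |F x| ≤ C) :
    |∫ x in u..v, F x| ≤ C * (b - a) := by
  rw [integral_eq_integral_of_support_subset (hsupp.trans (Ioc_subset_Ioc hua hbv)),
    ← integral_eq_integral_of_support_subset hsupp, ← abs_of_nonneg (sub_nonneg.2 hab)]
  have hC' : ∀ x ∈ uIoc a b, ‖F x‖ ≤ C := fun x hx => hC x (uIoc_of_le hab ▸ hx)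
  simpa only [Real.norm_eq_abs] using norm_integral_le_of_norm_le_const hC'

lemma succ_div_mem_Icc {i n : ℕ} (h : i < n) :
    ((i : ℝ) + 1) / n ∈ Icc ((i : ℝ) / (n + 1)) ((i + 2) / (n + 1)) := by
  have hn : (0 : ℝ) < n := by exact_mod_cast i.zero_le.trans_lt h
  have hin : (i : ℝ) + 1 ≤ n := by exact_mod_cast h
  constructor <;> rw [div_le_div_iff₀ (by positivity) (by positivity)] <;> nlinarith

lemma measurable_hatDeriv (n k : ℕ) : Measurable (hatDeriv n k) :=
  measurable_const.ite measurableSet_Ioo (measurable_const.ite measurableSet_Ioo measurable_const)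

lemma abs_hatDeriv_le (n k : ℕ) (x : ℝ) : |hatDeriv n k x| ≤ n + 1 := by
  have : (0 : ℝ) ≤ n + 1 := by positivity
  unfold hatDeriv
  split_ifs
  · exact (abs_of_nonneg this).le
  · rw [abs_neg, abs_of_nonneg this]
  · simpa using this

lemma support_hatDeriv_succ_subset (n k : ℕ) :
    support (hatDeriv n (k + 1)) ⊆ Ioo ((k : ℝ) / (n + 1)) ((k + 2) / (n + 1)) := by
  intro x hx
  rw [mem_support, hatDeriv] at hx
  simp only [mul_one_div, Nat.cast_add, Nat.cast_one, add_sub_cancel_right, add_assoc,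
    one_add_one_eq_two] at hx
  split_ifs at hx with h₁ h₂
  · exact ⟨h₁.1, h₁.2.trans_le (by gcongr; linarith)⟩
  · exact ⟨(by gcongr; linarith : _ ≤ _).trans_lt h₂.1, h₂.2⟩
  · exact absurd rfl hx

lemma hatDeriv_succ_mul_hatDeriv_succ_eq_zero {n k l : ℕ} (h : l + 2 ≤ k) (x : ℝ) :
    hatDeriv n (l + 1) x * hatDeriv n (k + 1) x = 0 := by
  by_contra hx
  have hl := support_hatDeriv_succ_subset n l (left_ne_zero_of_mul hx)
  have hk := support_hatDeriv_succ_subset n k (right_ne_zero_of_mul hx)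
  have := hk.1.trans hl.2
  rw [div_lt_div_iff_of_pos_right (by positivity)] at this
  have : (l : ℝ) + 2 ≤ k := by exact_mod_cast h
  linarith

lemma intervalIntegrable_hatDeriv_mul_hatDeriv (n k l : ℕ) (a b : ℝ) :
    IntervalIntegrable (fun x => hatDeriv n k x * hatDeriv n l x) volume a b :=
  (intervalIntegrable_const (c := ((n : ℝ) + 1) * (n + 1))).mono_fun'
    ((measurable_hatDeriv n k).mul (measurable_hatDeriv n l)).aestronglyMeasurable
    (ae_of_all _ fun x => by
      simp only [Real.norm_eq_abs, abs_mul]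
      exact mul_le_mul (abs_hatDeriv_le n k x) (abs_hatDeriv_le n l x) (abs_nonneg _)
        (by positivity))

lemma Kmat_apply_eq_zero (n : ℕ) (g : ℝ → ℝ) {i j : Fin n}
    (h : 1 < ((i : ℤ) - (j : ℤ)).natAbs) : Kmat n g i j = 0 := by
  have hvanish : ∀ x, hatDeriv n ((j : ℕ) + 1) x * hatDeriv n ((i : ℕ) + 1) x = 0 := by
    rcases Nat.lt_or_gt_of_ne (by omega : (j : ℕ) ≠ i) with hji | hij
    · exact hatDeriv_succ_mul_hatDeriv_succ_eq_zero (by omega)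
    · exact fun x => by rw [mul_comm]; exact hatDeriv_succ_mul_hatDeriv_succ_eq_zero (by omega) x
  simp [Kmat, mul_assoc, hvanish]

lemma Kmat_apply_sub_mul_Kmat_one_apply {n : ℕ} {g : ℝ → ℝ} (hg : ContinuousOn g (Icc 0 1))
    (c : ℝ) (i j : Fin n) :
    Kmat n g i j - c * Kmat n (fun _ => 1) i j =
      ∫ x in (0 : ℝ)..1, (g x - c) * (hatDeriv n (j + 1) x * hatDeriv n (i + 1) x) := by
  have hψ := intervalIntegrable_hatDeriv_mul_hatDeriv n (j + 1) (i + 1) 0 1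
  have hgψ := hψ.continuousOn_mul (by rwa [uIcc_of_le zero_le_one])
  simp only [Kmat, Matrix.of_apply, one_mul, sub_mul, mul_assoc]
  rw [integral_sub hgψ (hψ.const_mul c), intervalIntegral.integral_const_mul]

lemma abs_Kmat_sub_mul_Kmat_one_le {n : ℕ} {g : ℝ → ℝ} (hg : ContinuousOn g (Icc 0 1)) {ω : ℝ}
    (hgω : ∀ x ∈ Icc (0 : ℝ) 1, ∀ y ∈ Icc (0 : ℝ) 1,
      |x - y| ≤ 2 / ((n : ℝ) + 1) → |g x - g y| ≤ ω) (i j : Fin n) :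
    |Kmat n g i j - g ((((i : ℕ) : ℝ) + 1) / (n : ℝ)) * Kmat n (fun _ => 1) i j| ≤
      2 * ((n : ℝ) + 1) * ω := by
  set s : ℝ := (((i : ℕ) : ℝ) + 1) / n
  set a : ℝ := (i : ℕ) / (n + 1)
  set b : ℝ := ((i : ℕ) + 2) / (n + 1)
  have hs : s ∈ Icc a b := succ_div_mem_Icc i.isLt
  have ha : 0 ≤ a := by positivity
  have hb : b ≤ 1 := by
    rw [div_le_one (by positivity)]
    exact_mod_cast (by omega : (i : ℕ) + 2 ≤ n + 1)
  have hsupp : support (fun x => (g x - g s) * (hatDeriv n (j + 1) x * hatDeriv n (i + 1) x))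
      ⊆ Ioc a b := by
    exact (support_mul_subset_right _ _).trans <| (support_mul_subset_right _ _).trans <|
      (support_hatDeriv_succ_subset n i).trans Ioo_subset_Ioc_self
  have hbound : ∀ x ∈ Ioc a b,
      |(g x - g s) * (hatDeriv n (j + 1) x * hatDeriv n (i + 1) x)| ≤ ω * (n + 1) ^ 2 := by
    intro x hx
    have hdist : |x - s| ≤ 2 / ((n : ℝ) + 1) :=
      (Real.dist_le_of_mem_Icc (Ioc_subset_Icc_self hx) hs).trans_eq (by simp only [a, b]; ring)
    have hgx : |g x - g s| ≤ ω :=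
      hgω x ⟨ha.trans hx.1.le, hx.2.trans hb⟩ s ⟨ha.trans hs.1, hs.2.trans hb⟩ hdist
    rw [abs_mul, abs_mul, sq]
    exact mul_le_mul hgx (mul_le_mul (abs_hatDeriv_le ..) (abs_hatDeriv_le ..) (abs_nonneg _)
      (by positivity)) (by positivity) ((abs_nonneg _).trans hgx)
  rw [Kmat_apply_sub_mul_Kmat_one_apply hg]
  calc _ ≤ ω * (n + 1) ^ 2 * (b - a) :=
        abs_intervalIntegral_le_of_support_subset (hs.1.trans hs.2) ha hb hsupp hbound
    _ = 2 * ((n : ℝ) + 1) * ω := by simp only [a, b]; field_simp; ring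

theorem fe_stiffness_diagonal_sampling_approximation_general
    (n : ℕ) (g : ℝ → ℝ) (hg : ContinuousOn g (Set.Icc 0 1))
    (ω : ℝ)
    (hgω : ∀ x ∈ Set.Icc (0 : ℝ) 1, ∀ y ∈ Set.Icc (0 : ℝ) 1,
      |x - y| ≤ 2 / ((n : ℝ) + 1) → |g x - g y| ≤ ω) :
    let Dg : Matrix (Fin n) (Fin n) ℝ :=
      Matrix.diagonal fun i => g ((((i : ℕ) : ℝ) + 1) / (n : ℝ))
    let Y : Matrix (Fin n) (Fin n) ℝ :=
      (1 / ((n : ℝ) + 1)) • (Kmat n g - Dg * Kmat n (fun _ => 1))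
    (∀ i j : Fin n,
      |Kmat n g i j - g ((((i : ℕ) : ℝ) + 1) / (n : ℝ)) * Kmat n (fun _ => 1) i j| ≤
        2 * ((n : ℝ) + 1) * ω) ∧
    (∀ i j : Fin n, 1 < ((i : ℤ) - (j : ℤ)).natAbs → Y i j = 0) ∧
    opNorm Y ≤ 6 * ω := by
  intro Dg Y
  have hω : 0 ≤ ω := (abs_nonneg _).trans <| hgω 0 (by simp) 0 (by simp) (by simp; positivity)
  have hentry := abs_Kmat_sub_mul_Kmat_one_le hg hgω
  have hY : ∀ i j, Y i j = 1 / ((n : ℝ) + 1) *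
      (Kmat n g i j - g ((((i : ℕ) : ℝ) + 1) / (n : ℝ)) * Kmat n (fun _ => 1) i j) := by
    simp [Y, Dg, Matrix.diagonal_mul]
  have hband : ∀ i j : Fin n, 1 < ((i : ℤ) - (j : ℤ)).natAbs → Y i j = 0 := fun i j h => by
    rw [hY, Kmat_apply_eq_zero n g h, Kmat_apply_eq_zero n _ h, mul_zero, sub_zero, mul_zero]
  have hYle : ∀ i j, |Y i j| ≤ 2 * ω := fun i j => by
    rw [hY, abs_mul, abs_of_pos (by positivity), one_div_mul_eq_div, div_le_iff₀ (by positivity)]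
    linarith [hentry i j]
  refine ⟨hentry, hband, ?_⟩
  have hbandT : ∀ i j : Fin n, 1 < ((i : ℤ) - (j : ℤ)).natAbs → Y.transpose i j = 0 :=
    fun i j h => hband j i (by rwa [← Int.natAbs_neg, neg_sub])
  have := Matrix.norm_toEuclideanLin_le_of_sum_abs_le Y (by positivity : (0 : ℝ) ≤ 3 * (2 * ω))
    (Matrix.sum_abs_le_of_tridiagonal hband hYle)
    (Matrix.sum_abs_le_of_tridiagonal hbandT fun i j => hYle j i)
  rwa [Real.sqrt_mul_self (by positivity), ← mul_assoc, show (3 : ℝ) * 2 = 6 by norm_num] at this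

/-- If `g` is continuous on `[0,1]` with oscillation at most `ω` over distances `≤ 2/(n+1)`,
then (i) `|(K_n(g))_{ij} − g(i/n)(K_n(1))_{ij}| ≤ 2(n+1)ω` for all `i,j`, and (ii) the matrix
`Y_n = (1/(n+1))(K_n(g) − D_n(g)K_n(1))` is tridiagonal with spectral norm `‖Y_n‖ ≤ 6ω`. -/
theorem fe_stiffness_diagonal_sampling_approximation
    (n : ℕ) (hn : 1 ≤ n) (g : ℝ → ℝ) (hg : ContinuousOn g (Set.Icc 0 1))
    (ω : ℝ) (hω : 0 ≤ ω)
    (hgω : ∀ x ∈ Set.Icc (0 : ℝ) 1, ∀ y ∈ Set.Icc (0 : ℝ) 1,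
      |x - y| ≤ 2 / ((n : ℝ) + 1) → |g x - g y| ≤ ω) :
    let Dg : Matrix (Fin n) (Fin n) ℝ :=
      Matrix.diagonal fun i => g ((((i : ℕ) : ℝ) + 1) / (n : ℝ))
    let Y : Matrix (Fin n) (Fin n) ℝ :=
      (1 / ((n : ℝ) + 1)) • (Kmat n g - Dg * Kmat n (fun _ => 1))
    (∀ i j : Fin n,
      |Kmat n g i j - g ((((i : ℕ) : ℝ) + 1) / (n : ℝ)) * Kmat n (fun _ => 1) i j| ≤
        2 * ((n : ℝ) + 1) * ω) ∧
    (∀ i j : Fin n, 1 < ((i : ℤ) - (j : ℤ)).natAbs → Y i j = 0) ∧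
    opNorm Y ≤ 6 * ω :=
  fe_stiffness_diagonal_sampling_approximation_general n g hg ω hgω
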